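/- For every fixed y ∈ Y, the map x ↦ η(y, x) P_y(x) is globally Lipschitz on K̄. -/

import Mathlib

open Filter Topology MeasureTheory Set Metric Bornology RealInnerProductSpace
open scoped ENNReal NNReal

noncomputable section

namespace Bif

abbrev Xs (d : ℕ) : Type := EuclideanSpace ℝ (Fin d)
abbrev Ys (m : ℕ) : Type := EuclideanSpace ℝ (Fin m)
abbrev Zs (m d : ℕ) : Type := WithLp 2 (Ys m × Xs d)

variable {d m n : ℕ}

/-- The point `(y, x)` in `Y × ℝ^d` equipped with the product Euclidean (ℓ²) norm. -/
def ptYX (y : Ys m) (x : Xs d) : Zs m d := (WithLp.equiv 2 (Ys m × Xs d)).symm (y, x)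

def projY (p : Zs m d) : Ys m := ((WithLp.equiv 2 (Ys m × Xs d)) p).1

def projX (p : Zs m d) : Xs d := ((WithLp.equiv 2 (Ys m × Xs d)) p).2

/-- `f` is locally Lipschitz on `s`: every point of `s` has a relative
neighborhood on which `f` is Lipschitz. -/
def LocLipOn {α β : Type*} [PseudoEMetricSpace α] [PseudoEMetricSpace β]
    (s : Set α) (f : α → β) : Prop :=
  ∀ x ∈ s, ∃ C : NNReal, ∃ t ∈ 𝓝[s] x, LipschitzOnWith C f t

/-- The solution set `F(x) = {f_1(x), …, f_n(x)}`. -/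
def Fset (f : Fin n → Xs d → Ys m) (x : Xs d) : Set (Ys m) :=
  Set.range fun i => f i x

/-- The reduced Voronoi switching set `Σ°(x)`. -/
def Sigma0 (f : Fin n → Xs d → Ys m) (x : Xs d) : Set (Ys m) :=
  {y | ∃ i j : Fin n, f i x ≠ f j x ∧ ‖y - f i x‖ = ‖y - f j x‖ ∧
        ∀ k, ‖y - f i x‖ ≤ ‖y - f k x‖}

/-- The graph-closure switching set `Σ̃(x₀)`: the graph of `Σ̃` is the closure of
the graph of `Σ°` (over base points in `K`). -/
def SigmaTilde (K : Set (Xs d)) (f : Fin n → Xs d → Ys m) (x0 : Xs d) : Set (Ys m) :=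
  {y | (x0, y) ∈ closure {p : Xs d × Ys m | p.1 ∈ K ∧ p.2 ∈ Sigma0 f p.1}}

/-- `x₀` has a stable collapse pattern: on a relative neighborhood `U ⊆ K` of `x₀`
there is a partition (equivalence relation) of the branch indices such that two
branches agree at a point of `U` iff they lie in the same cluster. -/
def StableAt (K : Set (Xs d)) (f : Fin n → Xs d → Ys m) (x0 : Xs d) : Prop :=
  ∃ U ∈ 𝓝[K] x0, U ⊆ K ∧ ∃ R : Fin n → Fin n → Prop, Equivalence R ∧
    ∀ x ∈ U, ∀ i j : Fin n, (f i x = f j x ↔ R i j)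

/-- The unstable collapse set `𝒰 = K \ S`. -/
def Unstable (K : Set (Xs d)) (f : Fin n → Xs d → Ys m) : Set (Xs d) :=
  {x ∈ K | ¬ StableAt K f x}

/-- `P` is the priority nearest selector: `P y x = f i x` where `i` is the
smallest index minimizing `‖y - f i x‖`. -/
def IsPrioritySelector (f : Fin n → Xs d → Ys m) (P : Ys m → Xs d → Ys m) : Prop :=
  ∀ (y : Ys m) (x : Xs d), ∃ i : Fin n, P y x = f i x ∧
    (∀ j, ‖y - f i x‖ ≤ ‖y - f j x‖) ∧
    (∀ j, (∀ k, ‖y - f j x‖ ≤ ‖y - f k x‖) → i ≤ j)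

/-- On `closure K \ K`, `f` takes the value of the limit of `f` along `K` when this
limit exists, and `0` otherwise (limit-or-zero extension of the branch maps). -/
def IsLimitExtension (K : Set (Xs d)) (f : Fin n → Xs d → Ys m) : Prop :=
  ∀ i : Fin n, ∀ x ∈ closure K \ K,
    Tendsto (f i) (𝓝[K] x) (𝓝 (f i x)) ∨
    ((¬ ∃ L : Ys m, Tendsto (f i) (𝓝[K] x) (𝓝 L)) ∧ f i x = 0)

/-- `𝒟`: the points of `closure K` at which some (extended) branch fails to be
locally Lipschitz. -/
def DSet (K : Set (Xs d)) (f : Fin n → Xs d → Ys m) : Set (Xs d) :=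
  {x ∈ closure K | ∃ i : Fin n,
    ¬ ∃ C : NNReal, ∃ t ∈ 𝓝[closure K] x, LipschitzOnWith C (f i) t}

/-- The joint bad set `ℬ ⊆ Y × closure K`. -/
def BadSet (K : Set (Xs d)) (f : Fin n → Xs d → Ys m) : Set (Zs m d) :=
  {p | projX p ∈ DSet K f ∪ closure (Unstable K f) ∨ projY p ∈ SigmaTilde K f (projX p)}

/-- `ρ(y, x) = dist((y, x), ℬ)` in the product Euclidean norm. -/
def rhoB (K : Set (Xs d)) (f : Fin n → Xs d → Ys m) (y : Ys m) (x : Xs d) : ℝ :=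
  Metric.infDist (ptYX y x) (BadSet K f)

/-- `ω(y, x) = ρ(y, x) / (1 + ρ(y, x))`. -/
def omegaB (K : Set (Xs d)) (f : Fin n → Xs d → Ys m) (y : Ys m) (x : Xs d) : ℝ :=
  rhoB K f y x / (1 + rhoB K f y x)

/-- The safe tube `𝒮(R, s)`. -/
def STube (K : Set (Xs d)) (f : Fin n → Xs d → Ys m) (R s : ℝ) : Set (Ys m × Xs d) :=
  {q | q.2 ∈ closure K ∧ ‖q.1‖ ≤ R ∧ s ≤ omegaB K f q.1 q.2}

/-- The set whose supremum is the safe-set profile `H₁(R, s)`. -/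
def H1set (K : Set (Xs d)) (f : Fin n → Xs d → Ys m) (P : Ys m → Xs d → Ys m)
    (R s : ℝ) : Set ℝ :=
  {r | ∃ y x z, (y, x) ∈ STube K f R s ∧ (y, z) ∈ STube K f R s ∧ x ≠ z ∧
       r = ‖P y x - P y z‖ / ‖x - z‖}

/-- The set whose supremum is the safe-set profile `H₂(R, s)`. -/
def H2set (K : Set (Xs d)) (f : Fin n → Xs d → Ys m) (P : Ys m → Xs d → Ys m)
    (R s : ℝ) : Set ℝ :=
  {r | ∃ y x, (y, x) ∈ STube K f R s ∧ r = ‖P y x‖}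

def H1 (K : Set (Xs d)) (f : Fin n → Xs d → Ys m) (P : Ys m → Xs d → Ys m) (R s : ℝ) : ℝ :=
  sSup (H1set K f P R s)

def H2 (K : Set (Xs d)) (f : Fin n → Xs d → Ys m) (P : Ys m → Xs d → Ys m) (R s : ℝ) : ℝ :=
  sSup (H2set K f P R s)

/-- `λ_R(s) = 1 / (H₁(R, s) + H₂(R, s) + 1)`. -/
def lamB (K : Set (Xs d)) (f : Fin n → Xs d → Ys m) (P : Ys m → Xs d → Ys m)
    (R s : ℝ) : ℝ :=
  1 / (H1 K f P R s + H2 K f P R s + 1)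

/-- `Θ_R(r) = ∫₀^r λ_R(s) ds`. -/
def ThetaB (K : Set (Xs d)) (f : Fin n → Xs d → Ys m) (P : Ys m → Xs d → Ys m)
    (R r : ℝ) : ℝ :=
  ∫ s in (0:ℝ)..r, lamB K f P R s

/-- The damping factor `η(y, x)`. -/
def etaB (K : Set (Xs d)) (f : Fin n → Xs d → Ys m) (P : Ys m → Xs d → Ys m)
    (y : Ys m) (x : Xs d) : ℝ :=
  ThetaB K f P (1 + ‖y‖) (omegaB K f y x) /
    (1 + ThetaB K f P (1 + ‖y‖) (omegaB K f y x))

/-- The recurrent operator `g(y, x) = (1 − η(y, x)) y + η(y, x) P_y(x)`. -/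
def gB (K : Set (Xs d)) (f : Fin n → Xs d → Ys m) (P : Ys m → Xs d → Ys m)
    (y : Ys m) (x : Xs d) : Ys m :=
  (1 - etaB K f P y x) • y + etaB K f P y x • P y x

/-!
On the safe tube of level `s > 0`, `x` stays at distance `≥ s` from `𝒟` and `y` at distance
`≥ s` from `Σ̃(x)`. The first gives, by compactness of `closure K`, uniform Lipschitz constants
and bounds for all branches; the second makes the nearest branch value unique on a ball around
`y`, which forces the priority selector to be Lipschitz too. Hence `H₁` and `H₂` are finite for
`s > 0` and nonincreasing in `s`, so `λ_R` is nondecreasing and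
`Θ_R(b) - Θ_R(a) ≤ (b - a) λ_R(b)`. As `ω` and `t ↦ t / (1 + t)` are `1`-Lipschitz, the damping
factor absorbs `H₁` and `H₂`, and `x ↦ η(y, x) P_y(x)` is `2`-Lipschitz.
-/

section Nearest

variable {ι E : Type*}

def IsNearest [SeminormedAddCommGroup E] (v : ι → E) (σ : E) (a : ι) : Prop :=
  ∀ k, ‖σ - v a‖ ≤ ‖σ - v k‖

section Seminormed

variable [SeminormedAddCommGroup E] {v w : ι → E} {σ : E} {a : ι}

lemma IsNearest.norm_sub_le_add {δ : ℝ} (ha : IsNearest v σ a) (hvw : ∀ k, ‖v k - w k‖ ≤ δ)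
    (k : ι) : ‖σ - w a‖ ≤ ‖σ - w k‖ + 2 * δ := by
  have h₁ := norm_sub_le_norm_sub_add_norm_sub σ (v a) (w a)
  have h₂ := norm_sub_le_norm_sub_add_norm_sub σ (w k) (v k)
  have h₃ := hvw a
  have h₄ := norm_sub_rev (w k) (v k) ▸ hvw k
  linarith [ha k]

lemma isClosed_setOf_isNearest (v : ι → E) (a : ι) : IsClosed {σ | IsNearest v σ a} := by
  simp only [IsNearest, ofPred_forall]
  exact isClosed_iInter fun k => isClosed_le (by fun_prop) (by fun_prop)

lemma exists_isNearest [Finite ι] [Nonempty ι] (v : ι → E) (σ : E) : ∃ a, IsNearest v σ a :=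
  Finite.exists_min fun k => ‖σ - v k‖

lemma IsNearest.of_isPreconnected [Finite ι] {S : Set E} (hS : IsPreconnected S)
    (hunique : ∀ σ ∈ S, ∀ a b, IsNearest v σ a → IsNearest v σ b → v a = v b)
    {y : E} (hy : y ∈ S) (ha : IsNearest v y a) : ∀ σ ∈ S, IsNearest v σ a := by
  have : Nonempty ι := ⟨a⟩
  set U := {σ | IsNearest v σ a}
  set V := ⋃ b ∈ {b | v b ≠ v a}, {σ | IsNearest v σ b}
  have hV : IsClosed V := (Set.toFinite _).isClosed_biUnion fun b _ => isClosed_setOf_isNearest v b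
  have hcover : S ⊆ U ∪ V := by
    intro σ _
    obtain ⟨b, hb⟩ := exists_isNearest v σ
    by_cases hba : v b = v a
    · exact Or.inl fun k => hba ▸ hb k
    · exact Or.inr (mem_biUnion hba hb)
  have hdisj : S ∩ (U ∩ V) = ∅ := by
    refine eq_empty_of_forall_notMem fun σ ⟨hσ, hσa, hσV⟩ => ?_
    obtain ⟨b, hba, hσb⟩ := mem_iUnion₂.1 hσV
    exact hba (hunique σ hσ b a hσb hσa)
  rcases isPreconnected_iff_subset_of_disjoint_closed.1 hS U V
    (isClosed_setOf_isNearest v a) hV hcover hdisj with hU | hV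
  · exact hU
  · exact absurd (hV hy) fun hyV => (eq_empty_iff_forall_notMem.1 hdisj) y ⟨hy, ha, hyV⟩

end Seminormed

section InnerProduct

variable [NormedAddCommGroup E] [InnerProductSpace ℝ E] {v : ι → E} {a : ι}

lemma norm_sub_sq_sub_norm_sub_sq_add_smul (y c w : E) (t : ℝ) :
    ‖y + t • ‖c - w‖⁻¹ • (c - w) - c‖ ^ 2 - ‖y + t • ‖c - w‖⁻¹ • (c - w) - w‖ ^ 2
      = ‖y - c‖ ^ 2 - ‖y - w‖ ^ 2 - 2 * t * ‖c - w‖ := by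
  have expand : ∀ p : E, ‖p - c‖ ^ 2 - ‖p - w‖ ^ 2 = ‖c‖ ^ 2 - ‖w‖ ^ 2 - 2 * ⟪p, c - w⟫ := by
    intro p
    rw [norm_sub_sq_real, norm_sub_sq_real, inner_sub_right]
    ring
  rw [expand, expand, inner_add_left, real_inner_smul_left, real_inner_smul_left,
    real_inner_self_eq_norm_sq]
  rcases eq_or_ne ‖c - w‖ 0 with h | h
  · rw [h]; ring
  · field_simp
    ring

/-- Move `y` by `ε / 2` towards `v k`, away from `v a`: there `v a` is still nearest, hence
strictly nearer than `v k`, and `norm_sub_sq_sub_norm_sub_sq_add_smul` turns this into the bound. -/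
lemma IsNearest.mul_norm_sub_le [Finite ι] {y : E} {ε Q : ℝ} (hε : 0 < ε)
    (hunique : ∀ σ ∈ ball y ε, ∀ a b, IsNearest v σ a → IsNearest v σ b → v a = v b)
    (hQ : ∀ k, ‖y - v k‖ ≤ Q) (ha : IsNearest v y a) (k : ι) :
    ε * ‖v k - v a‖ ≤ 2 * Q * (‖y - v k‖ - ‖y - v a‖) := by
  have hgap : 0 ≤ ‖y - v k‖ - ‖y - v a‖ := sub_nonneg.2 (ha k)
  rcases eq_or_ne (v k) (v a) with hka | hka
  · simp [hka]
  set y' := y + (ε / 2) • ‖v k - v a‖⁻¹ • (v k - v a)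
  have hy' : y' ∈ ball y ε := by
    rw [mem_ball, dist_eq_norm, add_sub_cancel_left, norm_smul, norm_smul, norm_inv, norm_norm,
      inv_mul_cancel₀ (norm_ne_zero_iff.2 (sub_ne_zero.2 hka)), Real.norm_of_nonneg (by positivity)]
    linarith
  have hnear : IsNearest v y' a := ha.of_isPreconnected (convex_ball y ε).isPreconnected hunique
    (mem_ball_self hε) y' hy'
  have hstrict : ‖y' - v a‖ < ‖y' - v k‖ :=
    (hnear k).lt_of_ne fun h => hka (hunique y' hy' k a (fun j => h ▸ hnear j) hnear)
  have hsq := norm_sub_sq_sub_norm_sub_sq_add_smul y (v k) (v a) (ε / 2)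
  have hpos : 0 < ‖y' - v k‖ ^ 2 - ‖y' - v a‖ ^ 2 := by
    have := pow_lt_pow_left₀ hstrict (norm_nonneg _) two_ne_zero
    linarith
  calc ε * ‖v k - v a‖
      ≤ (‖y - v k‖ - ‖y - v a‖) * (‖y - v k‖ + ‖y - v a‖) := by nlinarith
    _ ≤ (‖y - v k‖ - ‖y - v a‖) * (2 * Q) := by
        gcongr
        linarith [hQ k, hQ a]
    _ = 2 * Q * (‖y - v k‖ - ‖y - v a‖) := by ring

lemma IsNearest.mul_norm_sub_le_of_uniform [Finite ι] {b c : ι → E} {y : E} {ε Q δ₁ δ₂ : ℝ}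
    (hε : 0 < ε)
    (hunique : ∀ σ ∈ ball y ε, ∀ a b', IsNearest b σ a → IsNearest b σ b' → b a = b b')
    (hQ : ∀ k, ‖y - b k‖ ≤ Q) (hvb : ∀ k, ‖v k - b k‖ ≤ δ₁) (hcb : ∀ k, ‖c k - b k‖ ≤ δ₂)
    {j : ι} (ha : IsNearest v y a) (hj : IsNearest c y j) :
    ε * ‖v a - c j‖ ≤ (ε + 4 * Q) * (δ₁ + δ₂) := by
  have : Nonempty ι := ⟨a⟩
  obtain ⟨k₀, hk₀⟩ := exists_isNearest b y
  have ga := hk₀.mul_norm_sub_le hε hunique hQ a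
  have gj := hk₀.mul_norm_sub_le hε hunique hQ j
  have ea := ha.norm_sub_le_add hvb k₀
  have ej := hj.norm_sub_le_add hcb k₀
  have hQ0 : 0 ≤ Q := (norm_nonneg _).trans (hQ a)
  have htri : ‖v a - c j‖ ≤ δ₁ + ‖b a - b k₀‖ + ‖b j - b k₀‖ + δ₂ := by
    have h₁ := norm_sub_le_norm_sub_add_norm_sub (v a) (b a) (c j)
    have h₂ := norm_sub_le_norm_sub_add_norm_sub (b a) (b k₀) (c j)
    have h₃ := norm_sub_le_norm_sub_add_norm_sub (b k₀) (b j) (c j)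
    rw [norm_sub_rev (b k₀) (b j), norm_sub_rev (b j) (c j)] at h₃
    linarith [hvb a, hcb j]
  have hk₀a : ‖y - b a‖ - ‖y - b k₀‖ ≤ 2 * δ₁ := by linarith
  have hk₀j : ‖y - b j‖ - ‖y - b k₀‖ ≤ 2 * δ₂ := by linarith
  calc ε * ‖v a - c j‖ ≤ ε * (δ₁ + ‖b a - b k₀‖ + ‖b j - b k₀‖ + δ₂) := by gcongr
    _ ≤ (ε + 4 * Q) * (δ₁ + δ₂) := by nlinarith

end InnerProduct

end Nearest

lemma dist_ptYX (y y' : Ys m) (x x' : Xs d) :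
    dist (ptYX y x) (ptYX y' x') = √(dist y y' ^ 2 + dist x x' ^ 2) :=
  WithLp.prod_dist_eq_of_L2 _ _

lemma dist_ptYX_left (y : Ys m) (x x' : Xs d) : dist (ptYX y x) (ptYX y x') = dist x x' := by
  simp [dist_ptYX, Real.sqrt_sq dist_nonneg]

lemma dist_ptYX_le (y y' : Ys m) (x x' : Xs d) :
    dist (ptYX y x) (ptYX y' x') ≤ dist y y' + dist x x' := by
  rw [dist_ptYX, Real.sqrt_le_left (by positivity)]
  nlinarith [dist_nonneg (x := y) (y := y'), dist_nonneg (x := x) (y := x')]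

lemma div_one_add_le_self {a : ℝ} (ha : 0 ≤ a) : a / (1 + a) ≤ a :=
  div_le_self ha (by linarith)

lemma abs_div_one_add_sub_div_one_add_le {a b : ℝ} (ha : 0 ≤ a) (hb : 0 ≤ b) :
    |a / (1 + a) - b / (1 + b)| ≤ |a - b| := by
  rw [div_sub_div _ _ (by positivity) (by positivity),
    show a * (1 + b) - (1 + a) * b = a - b by ring, abs_div]
  exact div_le_self (abs_nonneg _) (by rw [abs_of_pos (by positivity)]; nlinarith)

section Bad

variable (K : Set (Xs d)) (f : Fin n → Xs d → Ys m)

lemma rhoB_nonneg (y : Ys m) (x : Xs d) : 0 ≤ rhoB K f y x :=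
  infDist_nonneg

lemma rhoB_le_dist_of_mem_DSet (y : Ys m) (x : Xs d) {u : Xs d} (hu : u ∈ DSet K f) :
    rhoB K f y x ≤ dist x u :=
  dist_ptYX_left y x u ▸ infDist_le_dist_of_mem (Or.inl (Or.inl hu))

lemma rhoB_le_of_mem_Sigma0 (y : Ys m) (x : Xs d) {σ : Ys m} {w : Xs d} (hw : w ∈ K)
    (hσ : σ ∈ Sigma0 f w) : rhoB K f y x ≤ dist y σ + dist x w :=
  (infDist_le_dist_of_mem (show ptYX σ w ∈ BadSet K f from Or.inr (subset_closure ⟨hw, hσ⟩))).trans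
    (dist_ptYX_le y σ x w)

lemma abs_rhoB_sub_le (y : Ys m) (x z : Xs d) : |rhoB K f y x - rhoB K f y z| ≤ dist x z := by
  rw [← Real.dist_eq, ← dist_ptYX_left y x z]
  simpa [rhoB] using (lipschitz_infDist_pt (BadSet K f)).dist_le_mul (ptYX y x) (ptYX y z)

lemma omegaB_nonneg (y : Ys m) (x : Xs d) : 0 ≤ omegaB K f y x :=
  div_nonneg (rhoB_nonneg K f y x) (by linarith [rhoB_nonneg K f y x])

lemma omegaB_lt_one (y : Ys m) (x : Xs d) : omegaB K f y x < 1 :=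
  (div_lt_one (by linarith [rhoB_nonneg K f y x])).2 (by linarith)

lemma omegaB_le_rhoB (y : Ys m) (x : Xs d) : omegaB K f y x ≤ rhoB K f y x :=
  div_one_add_le_self (rhoB_nonneg K f y x)

lemma omegaB_sub_le (y : Ys m) (x z : Xs d) : omegaB K f y x - omegaB K f y z ≤ dist x z :=
  (le_abs_self _).trans <| (abs_div_one_add_sub_div_one_add_le (rhoB_nonneg K f y x)
    (rhoB_nonneg K f y z)).trans (abs_rhoB_sub_le K f y x z)

lemma notMem_thickening_DSet {δ : ℝ} {y : Ys m} {x : Xs d} (h : δ ≤ rhoB K f y x) :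
    x ∉ thickening δ (DSet K f) := by
  rw [mem_thickening_iff, not_exists]
  exact fun u ⟨hu, hxu⟩ => (h.trans (rhoB_le_dist_of_mem_DSet K f y x hu)).not_gt hxu

lemma exists_lipschitzOnWith_and_norm_le (hK : IsBounded K) {δ : ℝ} (hδ : 0 < δ) :
    ∃ C : ℝ≥0, ∃ M : ℝ, ∀ i, LipschitzOnWith C (f i) (closure K \ thickening δ (DSet K f)) ∧
      ∀ x ∈ closure K \ thickening δ (DSet K f), ‖f i x‖ ≤ M := by
  set G := closure K \ thickening δ (DSet K f)
  have hG : IsCompact G := hK.isCompact_closure.diff isOpen_thickening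
  have hloc : ∀ i, LocallyLipschitzOn G (f i) := by
    intro i x hx
    have hxD : x ∉ DSet K f := fun h => hx.2 (self_subset_thickening hδ _ h)
    obtain ⟨C, t, ht, hlip⟩ := not_not.1 fun h => hxD ⟨hx.1, i, h⟩
    exact ⟨C, t, nhdsWithin_mono _ sdiff_subset ht, hlip⟩
  choose C hC using fun i => (hloc i).exists_lipschitzOnWith_of_compact hG
  choose M hM using fun i => hG.exists_bound_of_continuousOn (hloc i).continuousOn
  obtain ⟨C₀, hC₀⟩ := Finite.exists_le C
  obtain ⟨M₀, hM₀⟩ := Finite.exists_le M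
  exact ⟨C₀, M₀, fun i => ⟨(hC i).weaken (hC₀ i), fun x hx => (hM i x hx).trans (hM₀ i)⟩⟩

end Bad

section Tube

variable (K : Set (Xs d)) (f : Fin n → Xs d → Ys m) (P : Ys m → Xs d → Ys m)

lemma STube_anti (R : ℝ) {a b : ℝ} (hab : a ≤ b) : STube K f R b ⊆ STube K f R a :=
  fun _ hq => ⟨hq.1, hq.2.1, hab.trans hq.2.2⟩

lemma notMem_thickening_of_mem_STube {R s : ℝ} {y : Ys m} {x : Xs d}
    (hx : (y, x) ∈ STube K f R s) : x ∉ thickening s (DSet K f) :=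
  notMem_thickening_DSet K f (hx.2.2.trans (omegaB_le_rhoB K f y x))

variable {K f P}

lemma exists_norm_selector_le (hK : IsBounded K) (hP : IsPrioritySelector f P) (R : ℝ) {s : ℝ}
    (hs : 0 < s) : ∃ M : ℝ, ∀ y x, (y, x) ∈ STube K f R s → ‖P y x‖ ≤ M := by
  obtain ⟨_, M, hM⟩ := exists_lipschitzOnWith_and_norm_le K f hK hs
  refine ⟨M, fun y x hx => ?_⟩
  obtain ⟨i, hPi, -⟩ := hP y x
  exact hPi ▸ (hM i).2 x ⟨hx.1, notMem_thickening_of_mem_STube K f hx⟩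

/-- Compare both selections with the branch values at a point `w ∈ K` close to `z`: since
`(y, z)` is far from the switching graph, the nearest value at `w` is unique on a ball around
`y`. -/
lemma exists_norm_selector_sub_le (hK : IsBounded K) (hP : IsPrioritySelector f P) (R : ℝ)
    {s : ℝ} (hs : 0 < s) :
    ∃ C : ℝ, ∀ y x z, (y, x) ∈ STube K f R s → (y, z) ∈ STube K f R s →
      ‖P y x - P y z‖ ≤ C * ‖x - z‖ := by
  obtain ⟨C₀, M₀, hCM⟩ := exists_lipschitzOnWith_and_norm_le K f hK (half_pos hs)
  set Q := R + M₀
  refine ⟨3 * C₀ * (1 + 8 * Q / s), fun y x z hx hz => ?_⟩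
  rcases eq_or_ne x z with rfl | hxz
  · simp
  set G := closure K \ thickening (s / 2) (DSet K f)
  have hG : ∀ {v}, (y, v) ∈ STube K f R s → v ∈ G := fun hv =>
    ⟨hv.1, fun h => notMem_thickening_of_mem_STube K f hv (thickening_mono (by linarith) _ h)⟩
  obtain ⟨w, hwK, hzw⟩ := Metric.mem_closure_iff.1 hz.1 (min (dist x z) (s / 4))
    (lt_min (dist_pos.2 hxz) (by linarith))
  have hρz : s ≤ rhoB K f y z := hz.2.2.trans (omegaB_le_rhoB K f y z)
  have hwG : w ∈ G := by
    refine ⟨subset_closure hwK, notMem_thickening_DSet K f (y := y) ?_⟩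
    have := (abs_le.1 (abs_rhoB_sub_le K f y z w)).2
    linarith [min_le_right (dist x z) (s / 4)]
  have hunique : ∀ σ ∈ ball y (s / 2), ∀ a b, IsNearest (f · w) σ a → IsNearest (f · w) σ b →
      f a w = f b w := by
    intro σ hσ a b ha hb
    by_contra hab
    have := rhoB_le_of_mem_Sigma0 K f y z hwK ⟨a, b, hab, le_antisymm (ha b) (hb a), ha⟩
    rw [mem_ball, dist_comm] at hσ
    linarith [min_le_right (dist x z) (s / 4)]
  have hQ : ∀ k, ‖y - f k w‖ ≤ Q := fun k =>
    (norm_sub_le _ _).trans (add_le_add hx.2.1 ((hCM k).2 w hwG))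
  have hLip : ∀ {v}, v ∈ G → ∀ k, ‖f k v - f k w‖ ≤ C₀ * dist v w := fun {v} hv k =>
    dist_eq_norm (f k v) (f k w) ▸ (hCM k).1.dist_le_mul _ hv _ hwG
  obtain ⟨i, hPi, hi, -⟩ := hP y x
  obtain ⟨j, hPj, hj, -⟩ := hP y z
  have hnear := IsNearest.mul_norm_sub_le_of_uniform (v := (f · x)) (half_pos hs) hunique hQ
    (hLip (hG hx)) (hLip (hG hz)) hi hj
  have hQ0 : 0 ≤ Q := (norm_nonneg _).trans (hQ i)
  have hxw : dist x w ≤ 2 * dist x z := by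
    linarith [dist_triangle x z w, min_le_left (dist x z) (s / 4)]
  have hzw' : dist z w ≤ dist x z := hzw.le.trans (min_le_left _ _)
  refine le_of_mul_le_mul_left ?_ (half_pos hs)
  calc s / 2 * ‖P y x - P y z‖ ≤ (s / 2 + 4 * Q) * (C₀ * dist x w + C₀ * dist z w) := by
        rw [hPi, hPj]; exact hnear
    _ ≤ (s / 2 + 4 * Q) * (C₀ * (2 * dist x z) + C₀ * dist x z) := by gcongr
    _ = s / 2 * (3 * C₀ * (1 + 8 * Q / s) * ‖x - z‖) := by
        rw [dist_eq_norm]; field_simp; ring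

variable (K f P)

lemma H1set_bddAbove (hK : IsBounded K) (hP : IsPrioritySelector f P) (R : ℝ) {s : ℝ}
    (hs : 0 < s) : BddAbove (H1set K f P R s) := by
  obtain ⟨C, hC⟩ := exists_norm_selector_sub_le hK hP R hs
  refine ⟨C, ?_⟩
  rintro r ⟨y, x, z, hx, hz, hxz, rfl⟩
  exact (div_le_iff₀ (norm_pos_iff.2 (sub_ne_zero.2 hxz))).2 (hC y x z hx hz)

lemma H2set_bddAbove (hK : IsBounded K) (hP : IsPrioritySelector f P) (R : ℝ) {s : ℝ}
    (hs : 0 < s) : BddAbove (H2set K f P R s) := by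
  obtain ⟨M, hM⟩ := exists_norm_selector_le hK hP R hs
  refine ⟨M, ?_⟩
  rintro r ⟨y, x, hx, rfl⟩
  exact hM y x hx

lemma H1_nonneg (R s : ℝ) : 0 ≤ H1 K f P R s :=
  Real.sSup_nonneg fun _ ⟨_, _, _, _, _, _, hr⟩ => hr ▸ by positivity

lemma H2_nonneg (R s : ℝ) : 0 ≤ H2 K f P R s :=
  Real.sSup_nonneg fun _ ⟨_, _, _, hr⟩ => hr ▸ norm_nonneg _

lemma H1_anti (hK : IsBounded K) (hP : IsPrioritySelector f P) (R : ℝ) {a b : ℝ} (ha : 0 < a)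
    (hab : a ≤ b) : H1 K f P R b ≤ H1 K f P R a :=
  Real.sSup_le (fun _ ⟨y, x, z, hx, hz, hxz, hr⟩ => le_csSup (H1set_bddAbove K f P hK hP R ha)
    ⟨y, x, z, STube_anti K f R hab hx, STube_anti K f R hab hz, hxz, hr⟩) (H1_nonneg K f P R a)

lemma H2_anti (hK : IsBounded K) (hP : IsPrioritySelector f P) (R : ℝ) {a b : ℝ} (ha : 0 < a)
    (hab : a ≤ b) : H2 K f P R b ≤ H2 K f P R a :=
  Real.sSup_le (fun _ ⟨y, x, hx, hr⟩ => le_csSup (H2set_bddAbove K f P hK hP R ha)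
    ⟨y, x, STube_anti K f R hab hx, hr⟩) (H2_nonneg K f P R a)

lemma lamB_nonneg (R s : ℝ) : 0 ≤ lamB K f P R s :=
  one_div_nonneg.2 (by linarith [H1_nonneg K f P R s, H2_nonneg K f P R s])

lemma lamB_le_one (R s : ℝ) : lamB K f P R s ≤ 1 :=
  div_le_one_of_le₀ (by linarith [H1_nonneg K f P R s, H2_nonneg K f P R s])
    (by linarith [H1_nonneg K f P R s, H2_nonneg K f P R s])

lemma lamB_mono (hK : IsBounded K) (hP : IsPrioritySelector f P) (R : ℝ) {a b : ℝ} (ha : 0 < a)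
    (hab : a ≤ b) : lamB K f P R a ≤ lamB K f P R b :=
  one_div_le_one_div_of_le (by linarith [H1_nonneg K f P R b, H2_nonneg K f P R b])
    (by linarith [H1_anti K f P hK hP R ha hab, H2_anti K f P hK hP R ha hab])

lemma lamB_mul_norm_selector_le (hK : IsBounded K) (hP : IsPrioritySelector f P) {R s : ℝ}
    (hs : 0 < s) {y : Ys m} {x : Xs d} (hx : (y, x) ∈ STube K f R s) :
    lamB K f P R s * ‖P y x‖ ≤ 1 := by
  have hH2 : ‖P y x‖ ≤ H2 K f P R s := le_csSup (H2set_bddAbove K f P hK hP R hs) ⟨y, x, hx, rfl⟩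
  rw [lamB, one_div_mul_eq_div, div_le_one (by linarith [H1_nonneg K f P R s, norm_nonneg (P y x)])]
  linarith [H1_nonneg K f P R s]

lemma lamB_mul_norm_selector_sub_le (hK : IsBounded K) (hP : IsPrioritySelector f P) {R s : ℝ}
    (hs : 0 < s) {y : Ys m} {x z : Xs d} (hx : (y, x) ∈ STube K f R s)
    (hz : (y, z) ∈ STube K f R s) : lamB K f P R s * ‖P y x - P y z‖ ≤ ‖x - z‖ := by
  have hH1 : ‖P y x - P y z‖ ≤ H1 K f P R s * ‖x - z‖ := by
    rcases eq_or_ne x z with rfl | hxz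
    · simp
    have hpos : 0 < ‖x - z‖ := norm_pos_iff.2 (sub_ne_zero.2 hxz)
    exact (div_le_iff₀ hpos).1
      (le_csSup (H1set_bddAbove K f P hK hP R hs) ⟨y, x, z, hx, hz, hxz, rfl⟩)
  have hH2 := H2_nonneg K f P R s
  calc lamB K f P R s * ‖P y x - P y z‖ ≤ lamB K f P R s * (H1 K f P R s * ‖x - z‖) := by
        gcongr; exact lamB_nonneg K f P R s
    _ = H1 K f P R s / (H1 K f P R s + H2 K f P R s + 1) * ‖x - z‖ := by rw [lamB]; ring
    _ ≤ 1 * ‖x - z‖ := by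
        gcongr
        exact div_le_one_of_le₀ (by linarith) (by linarith [H1_nonneg K f P R s])
    _ = ‖x - z‖ := one_mul _

end Tube

section Damping

variable (K : Set (Xs d)) (f : Fin n → Xs d → Ys m) (P : Ys m → Xs d → Ys m)

lemma lamB_intervalIntegrable (hK : IsBounded K) (hP : IsPrioritySelector f P) (R : ℝ)
    {a b : ℝ} (ha : 0 ≤ a) (hab : a ≤ b) : IntervalIntegrable (lamB K f P R) volume a b := by
  rw [intervalIntegrable_iff_integrableOn_Ioc_of_le hab]
  refine IntegrableOn.of_bound measure_Ioc_lt_top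
    (aemeasurable_restrict_of_monotoneOn measurableSet_Ioc ?_).aestronglyMeasurable 1
    (ae_of_all _ fun t => ?_)
  · exact fun t ht u _ htu => lamB_mono K f P hK hP R (ha.trans_lt ht.1) htu
  · rw [Real.norm_of_nonneg (lamB_nonneg K f P R t)]
    exact lamB_le_one K f P R t

lemma ThetaB_sub_eq (hK : IsBounded K) (hP : IsPrioritySelector f P) (R : ℝ) {a b : ℝ}
    (ha : 0 ≤ a) (hab : a ≤ b) :
    ThetaB K f P R b - ThetaB K f P R a = ∫ t in a..b, lamB K f P R t :=
  intervalIntegral.integral_interval_sub_left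
    (lamB_intervalIntegrable K f P hK hP R le_rfl (ha.trans hab))
    (lamB_intervalIntegrable K f P hK hP R le_rfl ha)

lemma ThetaB_le_ThetaB (hK : IsBounded K) (hP : IsPrioritySelector f P) (R : ℝ) {a b : ℝ}
    (ha : 0 ≤ a) (hab : a ≤ b) : ThetaB K f P R a ≤ ThetaB K f P R b := by
  rw [← sub_nonneg, ThetaB_sub_eq K f P hK hP R ha hab]
  exact intervalIntegral.integral_nonneg hab fun t _ => lamB_nonneg K f P R t

lemma ThetaB_sub_le (hK : IsBounded K) (hP : IsPrioritySelector f P) (R : ℝ) {a b : ℝ}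
    (ha : 0 ≤ a) (hab : a ≤ b) :
    ThetaB K f P R b - ThetaB K f P R a ≤ (b - a) * lamB K f P R b := by
  rw [ThetaB_sub_eq K f P hK hP R ha hab, ← smul_eq_mul, ← intervalIntegral.integral_const]
  exact intervalIntegral.integral_mono_on_of_le_Ioo hab
    (lamB_intervalIntegrable K f P hK hP R ha hab) intervalIntegrable_const
    fun t ht => lamB_mono K f P hK hP R (ha.trans_lt ht.1) ht.2.le

lemma ThetaB_zero (R : ℝ) : ThetaB K f P R 0 = 0 :=
  intervalIntegral.integral_same

/-- The estimate splits as `η_x P_x - η_z P_z = (η_x - η_z) P_x + η_z (P_x - P_z)`; each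
factor `λ` coming from `Θ` absorbs `H₂` in the first term and `H₁` in the second. -/
lemma dist_etaB_smul_le (hK : IsBounded K) (hP : IsPrioritySelector f P) (y : Ys m)
    {x z : Xs d} (hx : x ∈ closure K) (hz : z ∈ closure K)
    (hω : omegaB K f y z ≤ omegaB K f y x) :
    dist (etaB K f P y x • P y x) (etaB K f P y z • P y z) ≤ 2 * dist x z := by
  set R := 1 + ‖y‖
  set ωx := omegaB K f y x
  set ωz := omegaB K f y z
  set θ := ThetaB K f P R
  set ηx := etaB K f P y x
  set ηz := etaB K f P y z
  have hyR : ‖y‖ ≤ R := by linarith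
  have hωz0 : 0 ≤ ωz := omegaB_nonneg K f y z
  have hθz0 : 0 ≤ θ ωz := ThetaB_zero K f P R ▸ ThetaB_le_ThetaB K f P hK hP R le_rfl hωz0
  have hθzx : θ ωz ≤ θ ωx := ThetaB_le_ThetaB K f P hK hP R hωz0 hω
  have hηx : |ηx - ηz| ≤ (ωx - ωz) * lamB K f P R ωx := by
    refine (abs_div_one_add_sub_div_one_add_le (hθz0.trans hθzx) hθz0).trans ?_
    rw [abs_of_nonneg (sub_nonneg.2 hθzx)]
    exact ThetaB_sub_le K f P hK hP R hωz0 hω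
  have hηz : ηz ≤ ωz * lamB K f P R ωz := by
    refine (div_one_add_le_self hθz0).trans ?_
    simpa [ThetaB_zero] using ThetaB_sub_le K f P hK hP R le_rfl hωz0
  have hηz0 : 0 ≤ ηz := div_nonneg hθz0 (by linarith)
  have h₁ : (ωx - ωz) * (lamB K f P R ωx * ‖P y x‖) ≤ ωx - ωz := by
    rcases (omegaB_nonneg K f y x).eq_or_lt with h0 | hpos
    · simp [show ωx - ωz = 0 by linarith]
    · exact mul_le_of_le_one_right (sub_nonneg.2 hω)
        (lamB_mul_norm_selector_le K f P hK hP hpos ⟨hx, hyR, le_rfl⟩)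
  have h₂ : ωz * (lamB K f P R ωz * ‖P y x - P y z‖) ≤ ‖x - z‖ := by
    rcases hωz0.eq_or_lt with h0 | hpos
    · rw [← h0, zero_mul]; positivity
    · calc ωz * (lamB K f P R ωz * ‖P y x - P y z‖) ≤ ωz * ‖x - z‖ := by
            gcongr
            exact lamB_mul_norm_selector_sub_le K f P hK hP hpos ⟨hx, hyR, hω⟩ ⟨hz, hyR, le_rfl⟩
        _ ≤ ‖x - z‖ := mul_le_of_le_one_left (norm_nonneg _) (omegaB_lt_one K f y z).le
  calc dist (ηx • P y x) (ηz • P y z) = ‖(ηx - ηz) • P y x + ηz • (P y x - P y z)‖ := by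
        rw [dist_eq_norm, sub_smul, smul_sub]; abel_nf
    _ ≤ |ηx - ηz| * ‖P y x‖ + ηz * ‖P y x - P y z‖ := by
        refine (norm_add_le _ _).trans_eq ?_
        rw [norm_smul, norm_smul, Real.norm_eq_abs, Real.norm_of_nonneg hηz0]
    _ ≤ (ωx - ωz) * lamB K f P R ωx * ‖P y x‖ + ωz * lamB K f P R ωz * ‖P y x - P y z‖ := by
        gcongr
    _ ≤ 2 * dist x z := by
        rw [mul_assoc, mul_assoc, dist_eq_norm]
        linarith [omegaB_sub_le K f y x z, dist_eq_norm x z]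

end Damping

theorem statement17_general {d m n : ℕ}
    (K : Set (Xs d)) (hK : IsBounded K)
    (f : Fin n → Xs d → Ys m)
    (P : Ys m → Xs d → Ys m) (hP : IsPrioritySelector f P) :
    ∀ y : Ys m, ∃ C : NNReal,
      LipschitzOnWith C (fun x => etaB K f P y x • P y x) (closure K) := by
  intro y
  refine ⟨2, LipschitzOnWith.of_dist_le_mul fun x hx z hz => ?_⟩
  push_cast
  rcases le_total (omegaB K f y z) (omegaB K f y x) with h | h
  · exact dist_etaB_smul_le K f P hK hP y hx hz h
  · rw [dist_comm, dist_comm x]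
    exact dist_etaB_smul_le K f P hK hP y hz hx h

/-- For every fixed `y`, the map `x ↦ η(y, x) P_y(x)` is globally
Lipschitz on `closure K`. -/
theorem statement17 {d m n : ℕ}
    (K : Set (Xs d)) (hK : IsBounded K)
    (f : Fin n → Xs d → Ys m) (hf : ∀ i, LocLipOn K (f i))
    (hext : IsLimitExtension K f)
    (P : Ys m → Xs d → Ys m) (hP : IsPrioritySelector f P) :
    ∀ y : Ys m, ∃ C : NNReal,
      LipschitzOnWith C (fun x => etaB K f P y x • P y x) (closure K) :=
  statement17_general K hK f P hP

end Bif
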